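/- arXiv:2302.07615 — 3 statements merged into one kernel-verified Lean document; each statement's English description precedes it below -/
import Mathlib

section
/- Fix an integer n ≥ 1 and reals γ > 0, 0 ≤ τ ≤ 1, 0 ≤ p ≤ 1, μ > 0, δ ≥ 0. Suppose Z, F_1, …, F_n, F satisfy Assumptions 1–3, and let z* ∈ Z be a solution of the VI for F on Z. Fix z, m, u ∈ Z, and let û ∈ Z be a solution of the VI on Z for the operator G(w) = F_1(w) − F_1(m) + F(m) + (1/γ)(w − z − τ(m − z)). For each i ∈ {1, …, n}, set z⁺(i) = proj_Z[u + γ·(F_i(m) − F_1(m) − F_i(u) + F_1(u))]. Then: (1/n)∑_{i=1}^n ‖z⁺(i) − z*‖² + p‖z − z*‖² + (1 − p)‖m − z*‖² ≤ (1 − τ + p − γμ/2)‖z − z*‖² + (1 + τ − p − γμ/2)‖m − z*‖² + (2 + 4γδ²/μ + 4/(γμ) + 8γ²δ²)‖u − û‖² − (1 − τ − 3γμ/2)‖z − û‖² − (τ − 3γμ/2 − 8γ²δ²)‖m − û‖². -/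
/-!
Write `x i` for the drift of `F_i - F` from `u` to `m`. Each `z⁺(i)` is the projection of
`u + γ (x i - x 1)`, hence no farther from `z*`; since the drifts average to zero, averaging
over `i` costs only their variance, at most `γ²δ²‖m - u‖²`. The remaining distance
`‖u - z* - γ x 1‖²` is compared with `û`: the VI for `G` tested at `z*`, with strong monotonicity
and the VI for `F` at `z*`, gives
`(1 + 2γμ)‖û - z*‖² ≤ (1 - τ)(‖z - z*‖² - ‖z - û‖²) + τ(‖m - z*‖² - ‖m - û‖²) + error`,
and Cauchy–Schwarz, the triangle inequality and Young's inequality absorb the cross terms.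
-/

open scoped RealInnerProductSpace

section InnerProductSpace

variable {E : Type*} [NormedAddCommGroup E] [InnerProductSpace ℝ E]

theorem norm_sub_sq_le_of_inner_sub_nonpos {x p y : E} (h : ⟪x - p, y - p⟫ ≤ 0) :
    ‖p - y‖ ^ 2 ≤ ‖x - y‖ ^ 2 := by
  rw [show x - y = (x - p) - (y - p) by abel, norm_sub_sq_real (x - p), norm_sub_rev p y]
  nlinarith [sq_nonneg ‖x - p‖]

theorem sum_sub_inv_card_smul_sum {ι : Type*} [Fintype ι] [Nonempty ι] (f : ι → E) :
    ∑ i, (f i - (Fintype.card ι : ℝ)⁻¹ • ∑ j, f j) = 0 := by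
  rw [Finset.sum_sub_distrib, Finset.sum_const, Finset.card_univ, ← Nat.cast_smul_eq_nsmul ℝ,
    smul_smul, mul_inv_cancel₀ (by positivity), one_smul, sub_self]

theorem sum_norm_add_sq_of_sum_eq_zero {ι : Type*} (s : Finset ι) (w : E) (x : ι → E)
    (hx : ∑ i ∈ s, x i = 0) :
    ∑ i ∈ s, ‖w + x i‖ ^ 2 = s.card * ‖w‖ ^ 2 + ∑ i ∈ s, ‖x i‖ ^ 2 := by
  simp only [norm_add_sq_real, Finset.sum_add_distrib, ← Finset.mul_sum, ← inner_sum, hx,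
    inner_zero_right, mul_zero, add_zero, Finset.sum_const, nsmul_eq_mul]

theorem inv_card_mul_sum_norm_add_sq_le {ι : Type*} [Fintype ι] (w : E) (x : ι → E) {r : ℝ}
    (hx : ∑ i, x i = 0) (hr : ∀ i, ‖x i‖ ≤ r) :
    (Fintype.card ι : ℝ)⁻¹ * ∑ i, ‖w + x i‖ ^ 2 ≤ ‖w‖ ^ 2 + r ^ 2 := by
  rcases (Fintype.card ι).eq_zero_or_pos with hcard | hcard
  · rw [hcard, Nat.cast_zero, inv_zero, zero_mul]
    positivity
  replace hcard : (0 : ℝ) < Fintype.card ι := by exact_mod_cast hcard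
  have hsq : ∑ i, ‖x i‖ ^ 2 ≤ Fintype.card ι * r ^ 2 := by
    calc ∑ i, ‖x i‖ ^ 2 ≤ ∑ _i : ι, r ^ 2 :=
          Finset.sum_le_sum fun i _ ↦ pow_le_pow_left₀ (norm_nonneg (x i)) (hr i) 2
      _ = Fintype.card ι * r ^ 2 := by simp
  rw [sum_norm_add_sq_of_sum_eq_zero _ _ _ hx, inv_mul_le_iff₀ hcard, Finset.card_univ]
  linarith

theorem norm_sub_smul_le_of_norm_le {v w : E} {γ r : ℝ} (hγ : 0 ≤ γ) (hw : ‖w‖ ≤ r) :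
    ‖v - γ • w‖ ≤ ‖v‖ + γ * r := by
  grw [norm_sub_le, norm_smul, Real.norm_of_nonneg hγ, hw]

theorem two_inner_sub_convex_comb (t : ℝ) (a b c e : E) :
    2 * ⟪e - a - t • (b - a), c - e⟫
      = (1 - t) * (‖a - c‖ ^ 2 - ‖e - a‖ ^ 2) + t * (‖b - c‖ ^ 2 - ‖e - b‖ ^ 2)
        - ‖e - c‖ ^ 2 := by
  simp only [norm_sub_sq_real, inner_sub_left, inner_sub_right, real_inner_smul_left,
    real_inner_self_eq_norm_sq, real_inner_comm a, real_inner_comm b, real_inner_comm c e]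
  ring

theorem norm_sub_sq_add_le_of_prox_step {γ μ τ : ℝ} (hγ : 0 < γ) {a e z m zs w : E}
    (hw : 0 ≤ ⟪a + e + (1 / γ) • (w - z - τ • (m - z)), zs - w⟫)
    (ha : μ * ‖w - zs‖ ^ 2 ≤ ⟪a, w - zs⟫) :
    ‖w - zs‖ ^ 2 + 2 * γ * μ * ‖w - zs‖ ^ 2
      ≤ (1 - τ) * (‖z - zs‖ ^ 2 - ‖z - w‖ ^ 2) + τ * (‖m - zs‖ ^ 2 - ‖m - w‖ ^ 2)
        - 2 * γ * ⟪e, w - zs⟫ := by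
  have hscaled : 0 ≤ γ * ⟪a, zs - w⟫ + γ * ⟪e, zs - w⟫ + ⟪w - z - τ • (m - z), zs - w⟫ := by
    have := mul_nonneg hγ.le hw
    rwa [inner_add_left, inner_add_left, real_inner_smul_left, mul_add, mul_add, ← mul_assoc,
      mul_one_div_cancel hγ.ne', one_mul] at this
  have hid := two_inner_sub_convex_comb τ z m zs w
  rw [norm_sub_rev w z, norm_sub_rev w m] at hid
  have hflip : ∀ v : E, ⟪v, zs - w⟫ = -⟪v, w - zs⟫ := fun v ↦ by
    rw [← inner_neg_right, neg_sub]
  rw [hflip, hflip] at hscaled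
  nlinarith [mul_le_mul_of_nonneg_left ha hγ.le]

theorem average_norm_proj_local_step_sub_sq_le {ι : Type*} [Fintype ι] {Fi : ι → E → E}
    {F : E → E} (hF : ∀ w, F w = (Fintype.card ι : ℝ)⁻¹ • ∑ i, Fi i w) {proj : E → E}
    {zs m u : E} (hproj : ∀ x, ⟪x - proj x, zs - proj x⟫ ≤ 0) {γ δ : ℝ} (hγ : 0 ≤ γ)
    (hrel : ∀ i, ‖(Fi i m - F m) - (Fi i u - F u)‖ ≤ δ * ‖m - u‖) (i₀ : ι) :
    (Fintype.card ι : ℝ)⁻¹ * ∑ i, ‖proj (u + γ • (Fi i m - Fi i₀ m - Fi i u + Fi i₀ u)) - zs‖ ^ 2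
      ≤ ‖u - zs - γ • ((Fi i₀ m - F m) - (Fi i₀ u - F u))‖ ^ 2 + (γ * δ * ‖m - u‖) ^ 2 := by
  have : Nonempty ι := ⟨i₀⟩
  set x : ι → E := fun i ↦ (Fi i m - F m) - (Fi i u - F u)
  set w := u - zs - γ • x i₀
  have hx : ∑ i, γ • x i = 0 := by
    have hdev (v) : ∑ i, (Fi i v - F v) = 0 := by
      simpa only [hF] using sum_sub_inv_card_smul_sum (Fi · v)
    rw [← Finset.smul_sum, Finset.sum_sub_distrib, hdev, hdev, sub_self, smul_zero]
  have hproj_le (i) :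
      ‖proj (u + γ • (Fi i m - Fi i₀ m - Fi i u + Fi i₀ u)) - zs‖ ^ 2 ≤ ‖w + γ • x i‖ ^ 2 := by
    rw [show w + γ • x i = u + γ • (Fi i m - Fi i₀ m - Fi i u + Fi i₀ u) - zs by
      simp only [w, x]; module]
    exact norm_sub_sq_le_of_inner_sub_nonpos (hproj _)
  have hx_le (i) : ‖γ • x i‖ ≤ γ * δ * ‖m - u‖ := by
    rw [norm_smul, Real.norm_of_nonneg hγ, mul_assoc]
    exact mul_le_mul_of_nonneg_left (hrel i) hγ
  calc _ ≤ (Fintype.card ι : ℝ)⁻¹ * ∑ i, ‖w + γ • x i‖ ^ 2 :=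
        mul_le_mul_of_nonneg_left (Finset.sum_le_sum fun i _ ↦ hproj_le i) (by positivity)
    _ ≤ _ := inv_card_mul_sum_norm_add_sq_le w _ hx hx_le

theorem norm_sub_sq_le_of_server_solution {F₁ F : E → E} {γ μ τ δ : ℝ} (hγ : 0 < γ)
    {z m u zs w : E}
    (hw : 0 ≤ ⟪F₁ w - F₁ m + F m + (1 / γ) • (w - z - τ • (m - z)), zs - w⟫)
    (hstrong : μ * ‖w - zs‖ ^ 2 ≤ ⟪F w - F zs, w - zs⟫) (hzs : 0 ≤ ⟪F zs, w - zs⟫)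
    (hrel_w : ‖(F₁ w - F w) - (F₁ u - F u)‖ ≤ δ * ‖w - u‖)
    (hrel_m : ‖(F₁ m - F m) - (F₁ u - F u)‖ ≤ δ * ‖m - u‖) :
    ‖u - zs - γ • ((F₁ m - F m) - (F₁ u - F u))‖ ^ 2
      ≤ (1 - τ) * (‖z - zs‖ ^ 2 - ‖z - w‖ ^ 2) + τ * (‖m - zs‖ ^ 2 - ‖m - w‖ ^ 2)
        - 2 * (γ * μ) * ‖w - zs‖ ^ 2 + 2 * (1 + γ * δ) * ‖u - w‖ * ‖w - zs‖
        + (‖u - w‖ + γ * δ * ‖m - u‖) ^ 2 := by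
  set e := (F₁ w - F w) - (F₁ m - F m)
  set b := u - w - γ • ((F₁ m - F m) - (F₁ u - F u))
  have hprox := norm_sub_sq_add_le_of_prox_step hγ (a := F w) (e := e) (μ := μ) (z := z)
    (m := m) (τ := τ) (zs := zs) (w := w)
    (by rwa [show F w + e = F₁ w - F₁ m + F m by simp only [e]; abel])
    (by rw [inner_sub_left] at hstrong; linarith)
  -- The drifts of `F₁ - F` from `m` to `w` (in `e`) and from `u` to `m` (in `b`) telescope.
  have hcross : ⟪w - zs, b - γ • e⟫ ≤ ‖w - zs‖ * ((1 + γ * δ) * ‖u - w‖) := by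
    have hbe : b - γ • e = (u - w) - γ • ((F₁ w - F w) - (F₁ u - F u)) := by
      simp only [b, e]
      module
    have hnorm := norm_sub_smul_le_of_norm_le (v := u - w) hγ.le hrel_w
    rw [← hbe, norm_sub_rev w] at hnorm
    calc ⟪w - zs, b - γ • e⟫ ≤ ‖w - zs‖ * ‖b - γ • e‖ := real_inner_le_norm _ _
      _ ≤ ‖w - zs‖ * ((1 + γ * δ) * ‖u - w‖) := by gcongr; linarith
  have hb : ‖b‖ ^ 2 ≤ (‖u - w‖ + γ * δ * ‖m - u‖) ^ 2 := by
    have := norm_sub_smul_le_of_norm_le (v := u - w) hγ.le hrel_m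
    rw [← mul_assoc] at this
    exact pow_le_pow_left₀ (norm_nonneg b) this 2
  rw [show u - zs - γ • ((F₁ m - F m) - (F₁ u - F u)) = (w - zs) + b by simp only [b]; abel,
    norm_add_sq_real]
  rw [inner_sub_right, real_inner_smul_right, real_inner_comm e] at hcross
  linarith

end InnerProductSpace

theorem descent_scalar_bound {g h τ A B Q R S T M : ℝ} (hg : 0 < g)
    (hA0 : 0 ≤ A) (hB0 : 0 ≤ B) (hM0 : 0 ≤ M) (hA : A ≤ R + Q) (hB : B ≤ S + Q) (hM : M ≤ S + T) :
    (1 - τ) * (A ^ 2 - R ^ 2) + τ * (B ^ 2 - S ^ 2) - 2 * g * Q ^ 2 + 2 * (1 + h) * T * Q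
        + (T + h * M) ^ 2 + h ^ 2 * M ^ 2
      ≤ (1 - τ - g / 2) * A ^ 2 + (τ - g / 2) * B ^ 2 + (2 + 8 * h ^ 2 + 4 * (1 + h ^ 2) / g) * T ^ 2
        - (1 - τ - 3 * g / 2) * R ^ 2 - (τ - 3 * g / 2 - 8 * h ^ 2) * S ^ 2 := by
  have hA2 : A ^ 2 ≤ 3 / 2 * Q ^ 2 + 3 * R ^ 2 := by nlinarith [sq_nonneg (Q - 2 * R)]
  have hB2 : B ^ 2 ≤ 3 / 2 * Q ^ 2 + 3 * S ^ 2 := by nlinarith [sq_nonneg (Q - 2 * S)]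
  have hM2 : M ^ 2 ≤ 2 * S ^ 2 + 2 * T ^ 2 := by nlinarith [sq_nonneg (S - T)]
  have hMT : 2 * h * M * T ≤ h ^ 2 * M ^ 2 + T ^ 2 := by nlinarith [sq_nonneg (h * M - T)]
  -- Young's inequality with weight `g / 2`, then `(1 + h)² ≤ 2 (1 + h²)`.
  have hTQ : 2 * (1 + h) * T * Q ≤ g / 2 * Q ^ 2 + 4 * (1 + h ^ 2) / g * T ^ 2 := by
    have hsos : g / 2 * Q ^ 2 + 4 * (1 + h ^ 2) / g * T ^ 2 - 2 * (1 + h) * T * Q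
        = ((g * Q - 2 * (1 + h) * T) ^ 2 + 4 * (1 - h) ^ 2 * T ^ 2) / (2 * g) := by
      field_simp
      ring
    have : 0 ≤ ((g * Q - 2 * (1 + h) * T) ^ 2 + 4 * (1 - h) ^ 2 * T ^ 2) / (2 * g) := by
      positivity
    linarith
  nlinarith [mul_le_mul_of_nonneg_left hA2 hg.le, mul_le_mul_of_nonneg_left hB2 hg.le,
    mul_le_mul_of_nonneg_left hM2 (sq_nonneg h), mul_nonneg (sq_nonneg h) (sq_nonneg S),
    mul_nonneg (sq_nonneg h) (sq_nonneg T)]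

theorem one_iteration_descent_partial_participation_general
    (n d : ℕ) (hn : 1 ≤ n)
    (γ τ p μ δ : ℝ)
    (hγ : 0 < γ) (hμ : 0 < μ)
    (Z : Set (EuclideanSpace ℝ (Fin d)))
    (proj : EuclideanSpace ℝ (Fin d) → EuclideanSpace ℝ (Fin d))
    (hproj : ∀ x, ∀ y ∈ Z, ⟪x - proj x, y - proj x⟫ ≤ 0)
    (Fi : Fin n → EuclideanSpace ℝ (Fin d) → EuclideanSpace ℝ (Fin d))
    (F : EuclideanSpace ℝ (Fin d) → EuclideanSpace ℝ (Fin d))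
    (hF : ∀ w, F w = (n : ℝ)⁻¹ • ∑ i, Fi i w)
    (F1 : EuclideanSpace ℝ (Fin d) → EuclideanSpace ℝ (Fin d))
    (hF1 : F1 = Fi ⟨0, hn⟩)
    (hstrong : ∀ u ∈ Z, ∀ v ∈ Z, μ * ‖u - v‖ ^ 2 ≤ ⟪F u - F v, u - v⟫)
    (hrel : ∀ i, ∀ u ∈ Z, ∀ v ∈ Z,
      ‖(Fi i u - F u) - (Fi i v - F v)‖ ≤ δ * ‖u - v‖)
    (zstar : EuclideanSpace ℝ (Fin d)) (hzstar : zstar ∈ Z)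
    (hVI : ∀ w ∈ Z, 0 ≤ ⟪F zstar, w - zstar⟫)
    (z m u : EuclideanSpace ℝ (Fin d)) (hm : m ∈ Z) (hu : u ∈ Z)
    (G : EuclideanSpace ℝ (Fin d) → EuclideanSpace ℝ (Fin d))
    (hG : ∀ w, G w = F1 w - F1 m + F m + (1 / γ) • (w - z - τ • (m - z)))
    (uhat : EuclideanSpace ℝ (Fin d)) (huhat : uhat ∈ Z)
    (hVIhat : ∀ w ∈ Z, 0 ≤ ⟪G uhat, w - uhat⟫)
    (zplus : Fin n → EuclideanSpace ℝ (Fin d))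
    (hzplus : ∀ i, zplus i = proj (u + γ • (Fi i m - F1 m - Fi i u + F1 u))) :
    (n : ℝ)⁻¹ * ∑ i, ‖zplus i - zstar‖ ^ 2
        + p * ‖z - zstar‖ ^ 2 + (1 - p) * ‖m - zstar‖ ^ 2
      ≤ (1 - τ + p - γ * μ / 2) * ‖z - zstar‖ ^ 2
        + (1 + τ - p - γ * μ / 2) * ‖m - zstar‖ ^ 2
        + (2 + 4 * γ * δ ^ 2 / μ + 4 / (γ * μ) + 8 * γ ^ 2 * δ ^ 2) * ‖u - uhat‖ ^ 2
        - (1 - τ - 3 * γ * μ / 2) * ‖z - uhat‖ ^ 2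
        - (τ - 3 * γ * μ / 2 - 8 * γ ^ 2 * δ ^ 2) * ‖m - uhat‖ ^ 2 := by
  have hlocal := average_norm_proj_local_step_sub_sq_le (by simpa only [Fintype.card_fin] using hF)
    (hproj · zstar hzstar) hγ.le (fun i ↦ hrel i m hm u hu) ⟨0, hn⟩
  have hserver := norm_sub_sq_le_of_server_solution (F₁ := F1) (τ := τ) hγ
    (by simpa only [hG] using hVIhat zstar hzstar) (hstrong uhat huhat zstar hzstar)
    (hVI uhat huhat) (hF1 ▸ hrel _ uhat huhat u hu) (hF1 ▸ hrel _ m hm u hu)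
  have hscalar := descent_scalar_bound (τ := τ) (h := γ * δ) (mul_pos hγ hμ)
    (norm_nonneg (z - zstar)) (norm_nonneg (m - zstar)) (norm_nonneg (m - u)) (norm_sub_le_norm_sub_add_norm_sub _ _ _)
    (norm_sub_le_norm_sub_add_norm_sub _ _ _)
    (by simpa only [norm_sub_rev uhat u] using norm_sub_le_norm_sub_add_norm_sub m uhat u)
  have hcoef : 4 * (1 + (γ * δ) ^ 2) / (γ * μ) = 4 * γ * δ ^ 2 / μ + 4 / (γ * μ) := by
    field_simp
    ring
  rw [Fintype.card_fin, ← hF1] at hlocal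
  simp only [← hzplus] at hlocal
  rw [hcoef] at hscalar
  linarith

/-- one-iteration descent inequality of the Three Pillars Algorithm
with partial participation (Lemma 3 of the paper). Here `û` is the exact solution
of the server subproblem and `z⁺(i)` the update using the operator of device `i`;
the expectation over the uniformly chosen device is the average over `i`. -/
theorem one_iteration_descent_partial_participation
    (n d : ℕ) (hn : 1 ≤ n)
    (γ τ p μ δ L : ℝ)
    (hγ : 0 < γ) (hτ0 : 0 ≤ τ) (hτ1 : τ ≤ 1) (hp0 : 0 ≤ p) (hp1 : p ≤ 1)
    (hμ : 0 < μ) (hδ : 0 ≤ δ)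
    (Z : Set (EuclideanSpace ℝ (Fin d)))
    (hZne : Z.Nonempty) (hZcl : IsClosed Z) (hZcv : Convex ℝ Z)
    (proj : EuclideanSpace ℝ (Fin d) → EuclideanSpace ℝ (Fin d))
    (hprojmem : ∀ x, proj x ∈ Z)
    (hproj : ∀ x, ∀ y ∈ Z, ⟪x - proj x, y - proj x⟫ ≤ 0)
    (Fi : Fin n → EuclideanSpace ℝ (Fin d) → EuclideanSpace ℝ (Fin d))
    (F : EuclideanSpace ℝ (Fin d) → EuclideanSpace ℝ (Fin d))
    (hF : ∀ w, F w = (n : ℝ)⁻¹ • ∑ i, Fi i w)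
    (F1 : EuclideanSpace ℝ (Fin d) → EuclideanSpace ℝ (Fin d))
    (hF1 : F1 = Fi ⟨0, hn⟩)
    (hLip : ∀ i, ∀ u ∈ Z, ∀ v ∈ Z, ‖Fi i u - Fi i v‖ ≤ L * ‖u - v‖)
    (hmono : ∀ i, ∀ u ∈ Z, ∀ v ∈ Z, 0 ≤ ⟪Fi i u - Fi i v, u - v⟫)
    (hstrong : ∀ u ∈ Z, ∀ v ∈ Z, μ * ‖u - v‖ ^ 2 ≤ ⟪F u - F v, u - v⟫)
    (hrel : ∀ i, ∀ u ∈ Z, ∀ v ∈ Z,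
      ‖(Fi i u - F u) - (Fi i v - F v)‖ ≤ δ * ‖u - v‖)
    (zstar : EuclideanSpace ℝ (Fin d)) (hzstar : zstar ∈ Z)
    (hVI : ∀ w ∈ Z, 0 ≤ ⟪F zstar, w - zstar⟫)
    (z m u : EuclideanSpace ℝ (Fin d)) (hz : z ∈ Z) (hm : m ∈ Z) (hu : u ∈ Z)
    (G : EuclideanSpace ℝ (Fin d) → EuclideanSpace ℝ (Fin d))
    (hG : ∀ w, G w = F1 w - F1 m + F m + (1 / γ) • (w - z - τ • (m - z)))
    (uhat : EuclideanSpace ℝ (Fin d)) (huhat : uhat ∈ Z)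
    (hVIhat : ∀ w ∈ Z, 0 ≤ ⟪G uhat, w - uhat⟫)
    (zplus : Fin n → EuclideanSpace ℝ (Fin d))
    (hzplus : ∀ i, zplus i = proj (u + γ • (Fi i m - F1 m - Fi i u + F1 u))) :
    (n : ℝ)⁻¹ * ∑ i, ‖zplus i - zstar‖ ^ 2
        + p * ‖z - zstar‖ ^ 2 + (1 - p) * ‖m - zstar‖ ^ 2
      ≤ (1 - τ + p - γ * μ / 2) * ‖z - zstar‖ ^ 2
        + (1 + τ - p - γ * μ / 2) * ‖m - zstar‖ ^ 2
        + (2 + 4 * γ * δ ^ 2 / μ + 4 / (γ * μ) + 8 * γ ^ 2 * δ ^ 2) * ‖u - uhat‖ ^ 2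
        - (1 - τ - 3 * γ * μ / 2) * ‖z - uhat‖ ^ 2
        - (τ - 3 * γ * μ / 2 - 8 * γ ^ 2 * δ ^ 2) * ‖m - uhat‖ ^ 2 :=
  one_iteration_descent_partial_participation_general n d hn γ τ p μ δ hγ hμ Z proj hproj Fi F hF F1
    hF1 hstrong hrel zstar hzstar hVI z m u hm hu G hG uhat huhat hVIhat zplus hzplus
end

section
/- Let Z ⊆ ℝ^d be a nonempty closed convex set, and let G : ℝ^d → ℝ^d be L'-Lipschitz and μ'-strongly monotone on Z with 0 < μ' ≤ L'. Let u* ∈ Z be a solution of the VI for G on Z. Set η = 1/(4L') and define the extragradient iterates from any u_0 ∈ Z: for t ≥ 0, u_{t+1/2} = proj_Z[u_t − η·G(u_t)] and u_{t+1} = proj_Z[u_t − η·G(u_{t+1/2})]. Then for every H ≥ 0, ‖u_H − u*‖² ≤ (1 − μ'/(4L'))^H · ‖u_0 − u*‖², and in particular ‖u_H − u*‖² ≤ exp(−μ'H/(4L')) · ‖u_0 − u*‖². -/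
/-!
Let `v = proj(u - η G u)` and `w = proj(u - η G v)` be one extragradient step. The variational
characterisation of the projection, tested at `u*` for `w` and at `w` for `v`, gives
`‖w - u*‖² ≤ ‖u - u*‖² - ‖u - v‖² - ‖v - w‖² + 2η⟨G u - G v, w - v⟩ - 2η⟨G v, v - u*⟩`.
The Lipschitz bound makes the cross term at most `ηL (‖u - v‖² + ‖v - w‖²)`, and strong
monotonicity together with the VI at `u*` makes the last term at most `-2ημ ‖v - u*‖²`.
Since `‖u - u*‖² ≤ 2‖u - v‖² + 2‖v - u*‖²` and `ηL ≤ 1/3`, what is left is at most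
`-ημ ‖u - u*‖²`: every step contracts the squared distance to `u*` by `1 - ημ`.
-/

open scoped RealInnerProductSpace

noncomputable section

/-- Extragradient iterates: `u_{t+1/2} = proj_Z[u_t − η G(u_t)]`,
`u_{t+1} = proj_Z[u_t − η G(u_{t+1/2})]`. -/
def extraGrad {d : ℕ}
    (proj G : EuclideanSpace ℝ (Fin d) → EuclideanSpace ℝ (Fin d))
    (η : ℝ) (u0 : EuclideanSpace ℝ (Fin d)) : ℕ → EuclideanSpace ℝ (Fin d)
  | 0 => u0
  | t + 1 =>
    let ut := extraGrad proj G η u0 t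
    proj (ut - η • G (proj (ut - η • G ut)))

section ExtragradientStep

variable {E : Type*} [NormedAddCommGroup E] [InnerProductSpace ℝ E]
  {Z : Set E} {proj G : E → E} {η : ℝ}

def extraGradStep (proj G : E → E) (η : ℝ) (u : E) : E :=
  proj (u - η • G (proj (u - η • G u)))

lemma norm_sub_sq_eq_add_inner (x y z : E) :
    ‖x - z‖ ^ 2 = ‖x - y‖ ^ 2 + 2 * ⟪x - y, y - z⟫ + ‖y - z‖ ^ 2 := by
  rw [← norm_add_sq_real, sub_add_sub_cancel]

theorem norm_sub_sq_le_of_extragradient (hmem : ∀ x, proj x ∈ Z)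
    (hproj : ∀ x, ∀ y ∈ Z, ⟪x - proj x, y - proj x⟫ ≤ 0) {u v w z : E}
    (hv : proj (u - η • G u) = v) (hw : proj (u - η • G v) = w) (hz : z ∈ Z) :
    ‖w - z‖ ^ 2 ≤ ‖u - z‖ ^ 2 - ‖u - v‖ ^ 2 - ‖v - w‖ ^ 2
      + 2 * η * ⟪G u - G v, w - v⟫ - 2 * η * ⟪G v, v - z⟫ := by
  have hwz := hproj (u - η • G v) z hz
  have hvw := hproj (u - η • G u) w (hw ▸ hmem _)
  rw [hw] at hwz
  rw [hv] at hvw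
  have hexp_uz := norm_sub_sq_eq_add_inner u w z
  have hexp_uw := norm_sub_sq_eq_add_inner u v w
  simp only [inner_sub_left, inner_sub_right, real_inner_smul_left] at hwz hvw hexp_uz hexp_uw ⊢
  linarith

lemma mul_norm_sub_sq_le_inner_of_strongMonotone {μ : ℝ}
    (hsm : ∀ u ∈ Z, ∀ v ∈ Z, μ * ‖u - v‖ ^ 2 ≤ ⟪G u - G v, u - v⟫)
    {z : E} (hz : z ∈ Z) (hVI : ∀ y ∈ Z, 0 ≤ ⟪G z, y - z⟫) {v : E} (hv : v ∈ Z) :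
    μ * ‖v - z‖ ^ 2 ≤ ⟪G v, v - z⟫ := by
  have hmono := hsm v hv z hz
  rw [inner_sub_left] at hmono
  linarith [hVI v hv]

lemma sq_le_one_sub_mul_mul_sq_of_extragradient {η L μ a b c e g m s : ℝ}
    (hη : 0 ≤ η) (hμ : 0 ≤ μ) (hμL : μ ≤ L) (hηL : η * L ≤ 1 / 3) (ha : 0 ≤ a)
    (hbound : g ^ 2 ≤ a ^ 2 - b ^ 2 - c ^ 2 + 2 * η * m - 2 * η * s)
    (hm : m ≤ L * b * c) (hs : μ * e ^ 2 ≤ s) (htri : a ≤ b + e) :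
    g ^ 2 ≤ (1 - η * μ) * a ^ 2 := by
  have hημ : 0 ≤ η * μ := mul_nonneg hη hμ
  have hημL : η * μ ≤ η * L := mul_le_mul_of_nonneg_left hμL hη
  have hcross : 2 * η * m ≤ η * L * b ^ 2 + c ^ 2 := by
    nlinarith [mul_le_mul_of_nonneg_left hm (by positivity : (0 : ℝ) ≤ 2 * η),
      mul_nonneg (hημ.trans hημL) (sq_nonneg (b - c)), mul_nonneg (by linarith : 0 ≤ 1 - η * L) (sq_nonneg c)]
  have hmono : 2 * η * μ * e ^ 2 ≤ 2 * η * s := by nlinarith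
  have hsq : η * μ * a ^ 2 ≤ 2 * η * μ * b ^ 2 + 2 * η * μ * e ^ 2 := by
    nlinarith [mul_le_mul_of_nonneg_left (pow_le_pow_left₀ ha htri 2) hημ,
      mul_nonneg hημ (sq_nonneg (b - e))]
  nlinarith [mul_nonneg (by linarith : 0 ≤ 1 - η * L - 2 * (η * μ)) (sq_nonneg b)]

theorem norm_extraGradStep_sub_sq_le (hmem : ∀ x, proj x ∈ Z)
    (hproj : ∀ x, ∀ y ∈ Z, ⟪x - proj x, y - proj x⟫ ≤ 0) {L μ : ℝ}
    (hμ : 0 ≤ μ) (hμL : μ ≤ L)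
    (hLip : ∀ u ∈ Z, ∀ v ∈ Z, ‖G u - G v‖ ≤ L * ‖u - v‖)
    (hsm : ∀ u ∈ Z, ∀ v ∈ Z, μ * ‖u - v‖ ^ 2 ≤ ⟪G u - G v, u - v⟫)
    {z : E} (hz : z ∈ Z) (hVI : ∀ y ∈ Z, 0 ≤ ⟪G z, y - z⟫)
    (hη : 0 ≤ η) (hηL : η * L ≤ 1 / 3) {u : E} (hu : u ∈ Z) :
    ‖extraGradStep proj G η u - z‖ ^ 2 ≤ (1 - η * μ) * ‖u - z‖ ^ 2 := by
  set v := proj (u - η • G u) with hv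
  set w := extraGradStep proj G η u
  have hvZ : v ∈ Z := hmem _
  have hcross : ⟪G u - G v, w - v⟫ ≤ L * ‖u - v‖ * ‖v - w‖ := calc
    ⟪G u - G v, w - v⟫ ≤ ‖G u - G v‖ * ‖w - v‖ := real_inner_le_norm _ _
    _ ≤ L * ‖u - v‖ * ‖v - w‖ := by
      rw [norm_sub_rev w]
      exact mul_le_mul_of_nonneg_right (hLip u hu v hvZ) (norm_nonneg _)
  exact sq_le_one_sub_mul_mul_sq_of_extragradient hη hμ hμL hηL (norm_nonneg _)
    (norm_sub_sq_le_of_extragradient hmem hproj hv.symm rfl hz) hcross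
    (mul_norm_sub_sq_le_inner_of_strongMonotone hsm hz hVI hvZ)
    (norm_sub_le_norm_sub_add_norm_sub u v z)

end ExtragradientStep

section Iterates

variable {d : ℕ} {Z : Set (EuclideanSpace ℝ (Fin d))}
  {proj G : EuclideanSpace ℝ (Fin d) → EuclideanSpace ℝ (Fin d)} {η : ℝ}
  {u0 : EuclideanSpace ℝ (Fin d)}

lemma extraGrad_succ (t : ℕ) :
    extraGrad proj G η u0 (t + 1) = extraGradStep proj G η (extraGrad proj G η u0 t) :=
  rfl

lemma extraGrad_mem (hmem : ∀ x, proj x ∈ Z) (hu0 : u0 ∈ Z) :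
    ∀ t, extraGrad proj G η u0 t ∈ Z
  | 0 => hu0
  | _ + 1 => hmem _

lemma norm_extraGrad_sub_sq_le_pow (hmem : ∀ x, proj x ∈ Z) (hu0 : u0 ∈ Z)
    {z : EuclideanSpace ℝ (Fin d)} {ρ : ℝ} (hρ : 0 ≤ ρ)
    (hstep : ∀ u ∈ Z, ‖extraGradStep proj G η u - z‖ ^ 2 ≤ ρ * ‖u - z‖ ^ 2) (t : ℕ) :
    ‖extraGrad proj G η u0 t - z‖ ^ 2 ≤ ρ ^ t * ‖u0 - z‖ ^ 2 := by
  induction t with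
  | zero => simp [extraGrad]
  | succ t ih => calc
    ‖extraGrad proj G η u0 (t + 1) - z‖ ^ 2 ≤ ρ * ‖extraGrad proj G η u0 t - z‖ ^ 2 :=
      extraGrad_succ t ▸ hstep _ (extraGrad_mem hmem hu0 t)
    _ ≤ ρ * (ρ ^ t * ‖u0 - z‖ ^ 2) := mul_le_mul_of_nonneg_left ih hρ
    _ = ρ ^ (t + 1) * ‖u0 - z‖ ^ 2 := by ring

end Iterates

theorem extragradient_linear_convergence_general
    (d : ℕ) (Z : Set (EuclideanSpace ℝ (Fin d)))
    (proj : EuclideanSpace ℝ (Fin d) → EuclideanSpace ℝ (Fin d))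
    (hprojmem : ∀ x, proj x ∈ Z)
    (hproj : ∀ x, ∀ y ∈ Z, ⟪x - proj x, y - proj x⟫ ≤ 0)
    (G : EuclideanSpace ℝ (Fin d) → EuclideanSpace ℝ (Fin d))
    (L' μ' : ℝ) (hμ' : 0 < μ') (hμL : μ' ≤ L')
    (hLip : ∀ u ∈ Z, ∀ v ∈ Z, ‖G u - G v‖ ≤ L' * ‖u - v‖)
    (hsm : ∀ u ∈ Z, ∀ v ∈ Z, μ' * ‖u - v‖ ^ 2 ≤ ⟪G u - G v, u - v⟫)
    (ustar : EuclideanSpace ℝ (Fin d)) (hustar : ustar ∈ Z)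
    (hVI : ∀ z ∈ Z, 0 ≤ ⟪G ustar, z - ustar⟫)
    (η : ℝ) (hη : η = 1 / (4 * L'))
    (u0 : EuclideanSpace ℝ (Fin d)) (hu0 : u0 ∈ Z) :
    ∀ H : ℕ,
      ‖extraGrad proj G η u0 H - ustar‖ ^ 2
          ≤ (1 - μ' / (4 * L')) ^ H * ‖u0 - ustar‖ ^ 2 ∧
      ‖extraGrad proj G η u0 H - ustar‖ ^ 2
          ≤ Real.exp (-(μ' * (H : ℝ)) / (4 * L')) * ‖u0 - ustar‖ ^ 2 := by
  have hL : 0 < L' := hμ'.trans_le hμL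
  have hη0 : 0 ≤ η := by rw [hη]; positivity
  have hηL : η * L' = 1 / 4 := by rw [hη]; field_simp
  have hημ : η * μ' = μ' / (4 * L') := by rw [hη]; ring
  have hrate : 0 ≤ 1 - μ' / (4 * L') := by
    rw [sub_nonneg, div_le_one (by positivity)]; linarith
  have hgeo := norm_extraGrad_sub_sq_le_pow hprojmem hu0 hrate fun u hu =>
    hημ ▸ norm_extraGradStep_sub_sq_le hprojmem hproj hμ'.le hμL hLip hsm hustar hVI hη0
      (by rw [hηL]; norm_num) hu
  refine fun H => ⟨hgeo H, (hgeo H).trans (mul_le_mul_of_nonneg_right ?_ (sq_nonneg _))⟩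
  calc (1 - μ' / (4 * L')) ^ H ≤ Real.exp (-(μ' / (4 * L'))) ^ H :=
        pow_le_pow_left₀ hrate (Real.one_sub_le_exp_neg _) H
    _ = Real.exp (-(μ' * (H : ℝ)) / (4 * L')) := by rw [← Real.exp_nat_mul]; ring_nf

/-- linear convergence of the extragradient method with step
`η = 1/(4L')` for an `L'`-Lipschitz, `μ'`-strongly monotone operator. -/
theorem extragradient_linear_convergence
    (d : ℕ) (Z : Set (EuclideanSpace ℝ (Fin d)))
    (hZne : Z.Nonempty) (hZcl : IsClosed Z) (hZcv : Convex ℝ Z)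
    (proj : EuclideanSpace ℝ (Fin d) → EuclideanSpace ℝ (Fin d))
    (hprojmem : ∀ x, proj x ∈ Z)
    (hproj : ∀ x, ∀ y ∈ Z, ⟪x - proj x, y - proj x⟫ ≤ 0)
    (G : EuclideanSpace ℝ (Fin d) → EuclideanSpace ℝ (Fin d))
    (L' μ' : ℝ) (hμ' : 0 < μ') (hμL : μ' ≤ L')
    (hLip : ∀ u ∈ Z, ∀ v ∈ Z, ‖G u - G v‖ ≤ L' * ‖u - v‖)
    (hsm : ∀ u ∈ Z, ∀ v ∈ Z, μ' * ‖u - v‖ ^ 2 ≤ ⟪G u - G v, u - v⟫)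
    (ustar : EuclideanSpace ℝ (Fin d)) (hustar : ustar ∈ Z)
    (hVI : ∀ z ∈ Z, 0 ≤ ⟪G ustar, z - ustar⟫)
    (η : ℝ) (hη : η = 1 / (4 * L'))
    (u0 : EuclideanSpace ℝ (Fin d)) (hu0 : u0 ∈ Z) :
    ∀ H : ℕ,
      ‖extraGrad proj G η u0 H - ustar‖ ^ 2
          ≤ (1 - μ' / (4 * L')) ^ H * ‖u0 - ustar‖ ^ 2 ∧
      ‖extraGrad proj G η u0 H - ustar‖ ^ 2
          ≤ Real.exp (-(μ' * (H : ℝ)) / (4 * L')) * ‖u0 - ustar‖ ^ 2 :=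
  extragradient_linear_convergence_general d Z proj hprojmem hproj G L' μ' hμ' hμL hLip hsm ustar
    hustar hVI η hη u0 hu0
end
end

section
/- Let d ≥ 1, q ≥ 1 be integers, n = q·d with n > 1, and let s : {1, …, n} → {1, …, d} be the fixed map in which each value k ∈ {1, …, d} is attained exactly q times. For a permutation σ of {1, …, n}, define for u ∈ ℝ^d and i ∈ {1, …, n} the compressor Q_i^σ(u) = d · u_{s(σ(i))} e_{s(σ(i))}, where e_1, …, e_d is the standard basis of ℝ^d. Then, with E_σ denoting the average over all n! permutations σ of {1, …, n}: (a) E_σ[Q_i^σ(u)] = u for every u ∈ ℝ^d and every i; (b) for all a_1, …, a_n ∈ ℝ^d with ā = (1/n)∑_{j=1}^n a_j, E_σ‖ (1/n)∑_{i=1}^n Q_i^σ(a_i) − ā ‖² ≤ (1/n)∑_{i=1}^n ‖a_i − ā‖². -/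
/-!
Averaged over `σ`, the position `σ i` is uniform, so device `i` sees coordinate `k` with
probability `q / n = 1 / d`; the rescaling by `d` makes `Q_i^σ` unbiased.

For the variance, `Q_i^σ` is linear and `∑ᵢ Q_i^σ(ā) = n ā`, so one may replace `aᵢ` by the
centred `bᵢ = aᵢ - ā`, which sum to `0`. After reindexing by `σ⁻¹`,
`‖∑ᵢ Q_i^σ(bᵢ)‖² = d² ∑_{s x = s y} b_{σ⁻¹x}(s x) b_{σ⁻¹y}(s x)`. For a centred `c` and `x ≠ y`,
all off-diagonal correlations `∑_σ c(σ x) c(σ y)` coincide, so they equal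
`-(∑_σ c(σ x)²) / (n - 1) ≤ 0`. Dropping them leaves `E‖∑ᵢ Q_i^σ(bᵢ)‖² ≤ d ∑ᵢ ‖bᵢ‖²`,
and `d ≤ n` gives the bound.
-/

noncomputable section

/-- Compressor for the case `n = q·d`: `s : {1,…,n} → {1,…,d}` encodes the multiset
`S = {1,…,1,2,…,2,…,d,…,d}` (each value attained exactly `q` times), and for a
permutation `σ` of `{1,…,n}`, device `i` keeps the single coordinate `s(σ(i))`
rescaled by `d`. -/
def QpermBig (n d : ℕ) (s : Fin n → Fin d) (σ : Equiv.Perm (Fin n)) (i : Fin n)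
    (u : EuclideanSpace ℝ (Fin d)) : EuclideanSpace ℝ (Fin d) :=
  (d : ℝ) • EuclideanSpace.single (s (σ i)) (u (s (σ i)))

open Finset

theorem sum_comp_eq_nsmul_sum_of_card_fiber {α β M : Type*} [Fintype α] [Fintype β]
    [DecidableEq β] [AddCommMonoid M] {s : α → β} {q : ℕ} (hs : ∀ k, #{i | s i = k} = q)
    (F : β → M) :
    ∑ x, F (s x) = q • ∑ k, F k := by
  rw [← sum_fiberwise' univ s F, smul_sum]
  exact sum_congr rfl fun k _ => by rw [sum_const, hs k]

section EuclideanSingle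

variable {α ι : Type*} [Fintype α] [Fintype ι] [DecidableEq ι]

theorem norm_sum_single_sq (s : α → ι) (w : α → ℝ) :
    ‖∑ x, EuclideanSpace.single (s x) (w x)‖ ^ 2
      = ∑ x, ∑ y, if s x = s y then w x * w y else 0 := by
  rw [← real_inner_self_eq_norm_sq, sum_inner]
  refine sum_congr rfl fun x _ => ?_
  rw [inner_sum]
  refine sum_congr rfl fun y _ => ?_
  rw [EuclideanSpace.inner_single_left]
  simp [PiLp.single_apply]

theorem sum_single_comp_apply_of_card_fiber {s : α → ι} {q : ℕ} (hs : ∀ k, #{i | s i = k} = q)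
    (u : EuclideanSpace ℝ ι) :
    ∑ x, EuclideanSpace.single (s x) (u (s x)) = (q : ℝ) • u := by
  rw [sum_comp_eq_nsmul_sum_of_card_fiber hs (fun k => EuclideanSpace.single k (u k)),
    ← Nat.cast_smul_eq_nsmul ℝ]
  congr 1
  ext k
  simp

end EuclideanSingle

section PermSums

variable {α : Type*} [Fintype α] [DecidableEq α]

theorem sum_perm_apply_eq_sum_perm_apply {M : Type*} [AddCommMonoid M] (g : α → M) (x y : α) :
    ∑ π : Equiv.Perm α, g (π x) = ∑ π : Equiv.Perm α, g (π y) := by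
  rw [← Equiv.sum_comp (Equiv.mulRight (Equiv.swap x y))]
  simp

theorem card_nsmul_sum_perm_apply {M : Type*} [AddCommMonoid M] (g : α → M) (x : α) :
    Fintype.card α • ∑ π : Equiv.Perm α, g (π x)
      = Fintype.card (Equiv.Perm α) • ∑ z, g z := by
  calc Fintype.card α • ∑ π : Equiv.Perm α, g (π x)
      = ∑ y : α, ∑ π : Equiv.Perm α, g (π y) := by
        rw [← card_univ, ← sum_const]
        exact sum_congr rfl fun y _ => sum_perm_apply_eq_sum_perm_apply g x y
    _ = ∑ π : Equiv.Perm α, ∑ y, g (π y) := sum_comm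
    _ = Fintype.card (Equiv.Perm α) • ∑ z, g z := by
        rw [← card_univ, ← sum_const]
        exact sum_congr rfl fun π _ => Equiv.sum_comp π g

theorem sum_perm_apply {E : Type*} [AddCommGroup E] [Module ℝ E] (g : α → E) (x : α) :
    ∑ π : Equiv.Perm α, g (π x)
      = ((Fintype.card (Equiv.Perm α) : ℝ) / Fintype.card α) • ∑ z, g z := by
  have hα : (Fintype.card α : ℝ) ≠ 0 := by
    have := Fintype.card_pos_iff.2 ⟨x⟩
    positivity
  rw [div_eq_inv_mul, mul_smul, eq_inv_smul_iff₀ hα]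
  exact_mod_cast card_nsmul_sum_perm_apply g x

theorem sum_perm_mul_apply_of_ne {c : α → ℝ} (hc : ∑ z, c z = 0) {x y : α} (hxy : x ≠ y) :
    ((Fintype.card α : ℝ) - 1) * ∑ π : Equiv.Perm α, c (π x) * c (π y)
      = -∑ π : Equiv.Perm α, c (π x) ^ 2 := by
  have hswap : ∀ z ∈ univ.erase x,
      ∑ π : Equiv.Perm α, c (π x) * c (π z) = ∑ π : Equiv.Perm α, c (π x) * c (π y) := by
    intro z hz
    -- `π ↦ π * swap y z` keeps the value at `x` and sends the value at `y` to `z`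
    rw [← Equiv.sum_comp (Equiv.mulRight (Equiv.swap y z))]
    refine sum_congr rfl fun π _ => ?_
    simp [Equiv.swap_apply_of_ne_of_ne hxy (ne_of_mem_erase hz).symm]
  calc ((Fintype.card α : ℝ) - 1) * ∑ π : Equiv.Perm α, c (π x) * c (π y)
      = ∑ z ∈ univ.erase x, ∑ π : Equiv.Perm α, c (π x) * c (π z) := by
        rw [sum_congr rfl hswap, sum_const, card_erase_of_mem (mem_univ x), card_univ,
          nsmul_eq_mul, Nat.cast_pred (Fintype.card_pos_iff.2 ⟨x⟩)]
    _ = ∑ π : Equiv.Perm α, c (π x) * (∑ z, c (π z) - c (π x)) := by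
        rw [sum_comm]
        refine sum_congr rfl fun π _ => ?_
        rw [← mul_sum, sum_erase_eq_sub (mem_univ x)]
    _ = -∑ π : Equiv.Perm α, c (π x) ^ 2 := by
        simp only [fun π : Equiv.Perm α => Equiv.sum_comp π c, hc, ← sum_neg_distrib]
        exact sum_congr rfl fun π _ => by ring

theorem sum_perm_mul_apply_nonpos_of_ne {c : α → ℝ} (hc : ∑ z, c z = 0) {x y : α}
    (hxy : x ≠ y) : ∑ π : Equiv.Perm α, c (π x) * c (π y) ≤ 0 := by
  have hcard : (1 : ℝ) < Fintype.card α := by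
    exact_mod_cast Fintype.one_lt_card_iff.2 ⟨x, y, hxy⟩
  have h := sum_perm_mul_apply_of_ne hc hxy
  have hsq : 0 ≤ ∑ π : Equiv.Perm α, c (π x) ^ 2 := sum_nonneg fun π _ => sq_nonneg _
  nlinarith

theorem sum_perm_norm_sum_single_sq_le {ι : Type*} [Fintype ι] [DecidableEq ι] (s : α → ι)
    {b : α → EuclideanSpace ℝ ι} (hb : ∑ i, b i = 0) :
    ∑ π : Equiv.Perm α, ‖∑ x, EuclideanSpace.single (s x) (b (π x) (s x))‖ ^ 2
      ≤ (Fintype.card (Equiv.Perm α) : ℝ) / Fintype.card α * ∑ x, ∑ i, b i (s x) ^ 2 := by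
  have hoff : ∀ x, ∀ y ∈ univ.erase x, ∑ π : Equiv.Perm α,
      (if s x = s y then b (π x) (s x) * b (π y) (s y) else 0) ≤ 0 := by
    intro x y hy
    by_cases hsxy : s x = s y
    · have hc : ∑ i, b i (s x) = 0 := by simpa using congrArg (· (s x)) hb
      simpa only [hsxy, if_true] using
        sum_perm_mul_apply_nonpos_of_ne (hsxy ▸ hc) (ne_of_mem_erase hy).symm
    · simp only [hsxy, if_false, sum_const_zero, le_refl]
  calc ∑ π : Equiv.Perm α, ‖∑ x, EuclideanSpace.single (s x) (b (π x) (s x))‖ ^ 2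
      = ∑ x, ∑ y, ∑ π : Equiv.Perm α,
          (if s x = s y then b (π x) (s x) * b (π y) (s y) else 0) := by
        simp only [norm_sum_single_sq]
        rw [sum_comm]
        exact sum_congr rfl fun x _ => sum_comm
    _ ≤ ∑ x, ∑ π : Equiv.Perm α, b (π x) (s x) ^ 2 := by
        refine sum_le_sum fun x _ => ?_
        rw [← add_sum_erase _ _ (mem_univ x)]
        simpa only [if_true, sq] using add_le_of_nonpos_right (sum_nonpos (hoff x))
    _ = (Fintype.card (Equiv.Perm α) : ℝ) / Fintype.card α * ∑ x, ∑ i, b i (s x) ^ 2 := by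
        rw [mul_sum]
        exact sum_congr rfl fun x _ => sum_perm_apply (fun i => b i (s x) ^ 2) x

end PermSums

section QpermBig

variable {n d q : ℕ} {s : Fin n → Fin d}

theorem QpermBig_add (σ : Equiv.Perm (Fin n)) (i : Fin n) (u v : EuclideanSpace ℝ (Fin d)) :
    QpermBig n d s σ i (u + v) = QpermBig n d s σ i u + QpermBig n d s σ i v := by
  simp [QpermBig, PiLp.single_add, smul_add]

theorem sum_QpermBig_eq_smul_sum_single (σ : Equiv.Perm (Fin n))
    (b : Fin n → EuclideanSpace ℝ (Fin d)) :
    ∑ i, QpermBig n d s σ i (b i)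
      = (d : ℝ) • ∑ x, EuclideanSpace.single (s x) (b (σ⁻¹ x) (s x)) := by
  rw [smul_sum, ← Equiv.sum_comp σ
    (fun x => (d : ℝ) • EuclideanSpace.single (s x) (b (σ⁻¹ x) (s x)))]
  simp [QpermBig]

variable (hn : n = q * d) (hs : ∀ k, #{i | s i = k} = q)
include hn hs

theorem sum_QpermBig_const (σ : Equiv.Perm (Fin n)) (u : EuclideanSpace ℝ (Fin d)) :
    ∑ i, QpermBig n d s σ i u = (n : ℝ) • u := by
  rw [sum_QpermBig_eq_smul_sum_single σ (fun _ => u), sum_single_comp_apply_of_card_fiber hs,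
    smul_smul, hn, Nat.cast_mul, mul_comm]

theorem inv_card_smul_sum_perm_QpermBig (i : Fin n) (u : EuclideanSpace ℝ (Fin d)) :
    (Fintype.card (Equiv.Perm (Fin n)) : ℝ)⁻¹ • ∑ σ : Equiv.Perm (Fin n), QpermBig n d s σ i u
      = u := by
  have hn0 : (n : ℝ) ≠ 0 := Nat.cast_ne_zero.2 (Fin.pos i).ne'
  simp only [QpermBig]
  rw [sum_perm_apply (fun x => (d : ℝ) • EuclideanSpace.single (s x) (u (s x))) i, ← smul_sum,
    sum_single_comp_apply_of_card_fiber hs, smul_smul, smul_smul, smul_smul]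
  convert one_smul ℝ u using 2
  have hdq : (d : ℝ) * q = n := by rw [hn, Nat.cast_mul, mul_comm]
  rw [Fintype.card_fin, mul_assoc _ (d : ℝ), hdq]
  field_simp

theorem inv_smul_sum_QpermBig_sub_mean (hn0 : n ≠ 0) (σ : Equiv.Perm (Fin n))
    (a : Fin n → EuclideanSpace ℝ (Fin d)) :
    (n : ℝ)⁻¹ • ∑ i, QpermBig n d s σ i (a i) - (n : ℝ)⁻¹ • ∑ j, a j
      = (n : ℝ)⁻¹ • ∑ i, QpermBig n d s σ i (a i - (n : ℝ)⁻¹ • ∑ j, a j) := by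
  set abar := (n : ℝ)⁻¹ • ∑ j, a j
  have hsplit : ∑ i, QpermBig n d s σ i (a i)
      = ∑ i, QpermBig n d s σ i (a i - abar) + (n : ℝ) • abar := by
    rw [← sum_QpermBig_const hn hs σ abar, ← sum_add_distrib]
    simp only [← QpermBig_add, sub_add_cancel]
  rw [hsplit, smul_add, inv_smul_smul₀ (Nat.cast_ne_zero.2 hn0), add_sub_cancel_right]

theorem sum_perm_norm_sum_QpermBig_sq_le {b : Fin n → EuclideanSpace ℝ (Fin d)}
    (hb : ∑ i, b i = 0) :
    ∑ σ : Equiv.Perm (Fin n), ‖∑ i, QpermBig n d s σ i (b i)‖ ^ 2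
      ≤ Fintype.card (Equiv.Perm (Fin n)) * d * ∑ i, ‖b i‖ ^ 2 := by
  have hfiber : ∑ x, ∑ i, b i (s x) ^ 2 = q * ∑ i, ‖b i‖ ^ 2 := by
    rw [sum_comp_eq_nsmul_sum_of_card_fiber hs (fun k => ∑ i, b i k ^ 2), nsmul_eq_mul, sum_comm]
    simp only [EuclideanSpace.real_norm_sq_eq]
  have hqd : (q : ℝ) * d = n := by rw [hn, Nat.cast_mul]
  calc ∑ σ : Equiv.Perm (Fin n), ‖∑ i, QpermBig n d s σ i (b i)‖ ^ 2
      = d ^ 2 * ∑ π : Equiv.Perm (Fin n),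
          ‖∑ x, EuclideanSpace.single (s x) (b (π x) (s x))‖ ^ 2 := by
        simp only [sum_QpermBig_eq_smul_sum_single, norm_smul, mul_pow, Real.norm_natCast]
        rw [mul_sum, ← Equiv.sum_comp (Equiv.inv _)]
        rfl
    _ ≤ d ^ 2 * ((Fintype.card (Equiv.Perm (Fin n)) : ℝ) / n * (q * ∑ i, ‖b i‖ ^ 2)) := by
        rw [← hfiber]
        gcongr
        simpa only [Fintype.card_fin] using sum_perm_norm_sum_single_sq_le s hb
    -- `(n : ℝ) / n` is `1`, or `0` when `n = 0`
    _ = Fintype.card (Equiv.Perm (Fin n)) * d * ((n : ℝ) / n) * ∑ i, ‖b i‖ ^ 2 := by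
        rw [← hqd]
        ring
    _ ≤ Fintype.card (Equiv.Perm (Fin n)) * d * ∑ i, ‖b i‖ ^ 2 := by
        refine mul_le_mul_of_nonneg_right ?_ (by positivity)
        exact mul_le_of_le_one_right (by positivity) (div_self_le_one _)

end QpermBig

theorem perm_compressor_big_n_unbiased_and_variance_general
    (d q n : ℕ) (hq : 1 ≤ q) (hn : n = q * d) (hn1 : 1 < n)
    (s : Fin n → Fin d)
    (hs : ∀ k : Fin d, (Finset.univ.filter (fun i : Fin n => s i = k)).card = q) :
    (∀ (u : EuclideanSpace ℝ (Fin d)) (i : Fin n),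
        (Fintype.card (Equiv.Perm (Fin n)) : ℝ)⁻¹ •
            ∑ σ : Equiv.Perm (Fin n), QpermBig n d s σ i u = u) ∧
    (∀ a : Fin n → EuclideanSpace ℝ (Fin d),
        (Fintype.card (Equiv.Perm (Fin n)) : ℝ)⁻¹ *
            ∑ σ : Equiv.Perm (Fin n),
              ‖(n : ℝ)⁻¹ • ∑ i, QpermBig n d s σ i (a i) - (n : ℝ)⁻¹ • ∑ j, a j‖ ^ 2
          ≤ (n : ℝ)⁻¹ * ∑ i, ‖a i - (n : ℝ)⁻¹ • ∑ j, a j‖ ^ 2) := by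
  refine ⟨fun u i => inv_card_smul_sum_perm_QpermBig hn hs i u, fun a => ?_⟩
  set b := fun i => a i - (n : ℝ)⁻¹ • ∑ j, a j
  have hn0 : n ≠ 0 := by omega
  have hb : ∑ i, b i = 0 := by
    rw [sum_sub_distrib, sum_const, card_univ, Fintype.card_fin, ← Nat.cast_smul_eq_nsmul ℝ,
      smul_inv_smul₀ (Nat.cast_ne_zero.2 hn0), sub_self]
  have hdn : (d : ℝ) ≤ n := by exact_mod_cast hn ▸ Nat.le_mul_of_pos_left d hq
  calc (Fintype.card (Equiv.Perm (Fin n)) : ℝ)⁻¹ * ∑ σ : Equiv.Perm (Fin n),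
        ‖(n : ℝ)⁻¹ • ∑ i, QpermBig n d s σ i (a i) - (n : ℝ)⁻¹ • ∑ j, a j‖ ^ 2
      = (Fintype.card (Equiv.Perm (Fin n)) : ℝ)⁻¹ * (n : ℝ)⁻¹ ^ 2 *
          ∑ σ : Equiv.Perm (Fin n), ‖∑ i, QpermBig n d s σ i (b i)‖ ^ 2 := by
        simp only [inv_smul_sum_QpermBig_sub_mean hn hs hn0, norm_smul, mul_pow, norm_inv,
          Real.norm_natCast, ← mul_sum, mul_assoc]
        rfl
    _ ≤ (Fintype.card (Equiv.Perm (Fin n)) : ℝ)⁻¹ * (n : ℝ)⁻¹ ^ 2 *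
          (Fintype.card (Equiv.Perm (Fin n)) * d * ∑ i, ‖b i‖ ^ 2) := by
        gcongr
        exact sum_perm_norm_sum_QpermBig_sq_le hn hs hb
    _ = d / n * ((n : ℝ)⁻¹ * ∑ i, ‖b i‖ ^ 2) := by
        field_simp
    _ ≤ (n : ℝ)⁻¹ * ∑ i, ‖b i‖ ^ 2 := by
        exact mul_le_of_le_one_left (by positivity) (div_le_one_of_le₀ hdn (by positivity))

/-- in the case `n = q·d > 1`, the compressors `Q_i^σ` are
(a) unbiased, and (b) satisfy the variance bound
`E_σ ‖(1/n)∑ᵢ Q_i^σ(aᵢ) − ā‖² ≤ (1/n)∑ᵢ ‖aᵢ − ā‖²`. -/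
theorem perm_compressor_big_n_unbiased_and_variance
    (d q n : ℕ) (hd : 1 ≤ d) (hq : 1 ≤ q) (hn : n = q * d) (hn1 : 1 < n)
    (s : Fin n → Fin d)
    (hs : ∀ k : Fin d, (Finset.univ.filter (fun i : Fin n => s i = k)).card = q) :
    (∀ (u : EuclideanSpace ℝ (Fin d)) (i : Fin n),
        (Fintype.card (Equiv.Perm (Fin n)) : ℝ)⁻¹ •
            ∑ σ : Equiv.Perm (Fin n), QpermBig n d s σ i u = u) ∧
    (∀ a : Fin n → EuclideanSpace ℝ (Fin d),
        (Fintype.card (Equiv.Perm (Fin n)) : ℝ)⁻¹ *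
            ∑ σ : Equiv.Perm (Fin n),
              ‖(n : ℝ)⁻¹ • ∑ i, QpermBig n d s σ i (a i) - (n : ℝ)⁻¹ • ∑ j, a j‖ ^ 2
          ≤ (n : ℝ)⁻¹ * ∑ i, ‖a i - (n : ℝ)⁻¹ • ∑ j, a j‖ ^ 2) :=
  perm_compressor_big_n_unbiased_and_variance_general d q n hq hn hn1 s hs
end
end
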